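/- There exists a metric space (X,d) whose underlying topological space is a Cantor space, such that (X,d) is doubling, is not uniformly disconnected, and is uniformly perfect (i.e., has type (1,0,1)), and such that the set S_UD(X,d) of points of X having no uniformly disconnected neighborhood is a singleton. -/

import Mathlib

open Metric Set
open scoped ENNReal NNReal

noncomputable section

/-- A metric space is doubling if there is `N` such that every closed ball of radius `r`
can be covered by at most `N` closed balls of radius `r / 2`. -/
def IsDoubling (X : Type*) [MetricSpace X] : Prop :=
  ∃ N : ℕ, ∀ (x : X) (r : ℝ), ∃ c : Finset X, c.card ≤ N ∧
    Metric.closedBall x r ⊆ ⋃ y ∈ c, Metric.closedBall y (r / 2)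

/-- Every `δ`-chain is trivial (constant). -/
def IsUniformlyDisconnectedWith (X : Type*) [MetricSpace X] (δ : ℝ) : Prop :=
  ∀ (N : ℕ) (x : ℕ → X),
    (∀ i : ℕ, 1 ≤ i → i ≤ N → dist (x (i - 1)) (x i) ≤ δ * dist (x 0) (x N)) →
    ∀ i ≤ N, x i = x 0

def IsUniformlyDisconnected (X : Type*) [MetricSpace X] : Prop :=
  ∃ δ : ℝ, 0 < δ ∧ δ < 1 ∧ IsUniformlyDisconnectedWith X δ

/-- `ρ`-uniform perfectness. -/
def IsUniformlyPerfectWith (X : Type*) [MetricSpace X] (ρ : ℝ) : Prop :=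
  ∀ (x : X) (r : ℝ), 0 < r → r < Metric.diam (Set.univ : Set X) →
    (Metric.closedBall x r \ Metric.ball x (ρ * r)).Nonempty

def IsUniformlyPerfect (X : Type*) [MetricSpace X] : Prop :=
  ∃ ρ : ℝ, 0 < ρ ∧ ρ ≤ 1 ∧ IsUniformlyPerfectWith X ρ

/-- A metric space has type `(u, v, w) ∈ {0,1}³` (here encoded by `Bool`s) if `u = 1` exactly
when it is doubling, `v = 1` exactly when it is uniformly disconnected, and `w = 1` exactly
when it is uniformly perfect. -/
def HasType (X : Type*) [MetricSpace X] (u v w : Bool) : Prop :=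
  (IsDoubling X ↔ u = true) ∧ (IsUniformlyDisconnected X ↔ v = true) ∧
    (IsUniformlyPerfect X ↔ w = true)

/-- `S_D`: points having no doubling neighborhood. -/
def SD (X : Type*) [MetricSpace X] : Set X :=
  {x : X | ∀ s ∈ nhds x, ¬ IsDoubling ↥s}

/-- `S_UD`: points having no uniformly disconnected neighborhood. -/
def SUD (X : Type*) [MetricSpace X] : Set X :=
  {x : X | ∀ s ∈ nhds x, ¬ IsUniformlyDisconnected ↥s}

/-- `S_UP`: points having no uniformly perfect neighborhood. -/
def SUP (X : Type*) [MetricSpace X] : Set X :=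
  {x : X | ∀ s ∈ nhds x, ¬ IsUniformlyPerfect ↥s}

/-- The ternary correspondence map `T(x) = Σ_{i≥1} 2 x_i / 3^i` (indices shifted to start
at `0`). -/
def cantorT (x : ℕ → Bool) : ℝ :=
  ∑' i : ℕ, 2 * (if x i then (1 : ℝ) else 0) / 3 ^ (i + 1)

/-- A Cantor space: a topological space homeomorphic to the middle-third Cantor set
(`cantorSet` is Mathlib's middle-third Cantor set in `ℝ`). -/
def IsCantorSpace (X : Type*) [TopologicalSpace X] : Prop :=
  Nonempty (X ≃ₜ ↥cantorSet)

/-- The first index at which `x` and `y` differ. -/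
def seqV (x y : ℕ → Bool) : ℕ := sInf {n | x n ≠ y n}

-- The standard ultrametric `e(x,y) = 3^{-(v(x,y)+1)}` on `2^ℕ` (indices starting at `0`,
-- corresponding to `3^{-min{n ≥ 1 : x_n ≠ y_n}}` with indices starting at `1`).
open Classical in
def cantorE (x y : ℕ → Bool) : ℝ :=
  if x = y then 0 else (3 : ℝ)⁻¹ ^ (seqV x y + 1)

/-- A shrinking sequence: positive, non-increasing, converging to `0`. -/
def IsShrinking (α : ℕ → ℝ) : Prop :=
  (∀ n, 0 < α n) ∧ (∀ m n : ℕ, m ≤ n → α n ≤ α m) ∧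
    Filter.Tendsto α Filter.atTop (nhds 0)

-- The distance `d_α(x,y) = α (v(x,y))` associated with a sequence `α`.
open Classical in
def seqDist (α : ℕ → ℝ) (x y : ℕ → Bool) : ℝ :=
  if x = y then 0 else α (seqV x y)

lemma seqV_comm (x y : ℕ → Bool) : seqV x y = seqV y x := by
  unfold seqV
  congr 1
  ext n
  exact ne_comm

lemma seqDist_self (α : ℕ → ℝ) (x : ℕ → Bool) : seqDist α x x = 0 := by
  rw [seqDist, if_pos rfl]

lemma seqDist_of_ne (α : ℕ → ℝ) {x y : ℕ → Bool} (h : x ≠ y) :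
    seqDist α x y = α (seqV x y) := by
  rw [seqDist, if_neg h]

lemma seqDist_nonneg {α : ℕ → ℝ} (hα : ∀ n, 0 < α n) (x y : ℕ → Bool) :
    0 ≤ seqDist α x y := by
  rcases eq_or_ne x y with h | h
  · rw [h, seqDist_self]
  · rw [seqDist_of_ne α h]
    exact (hα _).le

lemma min_seqV_le {x y z : ℕ → Bool} (hxz : x ≠ z) :
    min (seqV x y) (seqV y z) ≤ seqV x z := by
  have hne : {n | x n ≠ z n}.Nonempty := by
    rcases Function.ne_iff.mp hxz with ⟨n, hn⟩
    exact ⟨n, hn⟩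
  have hmem : x (seqV x z) ≠ z (seqV x z) := Nat.sInf_mem hne
  rcases ne_or_eq (x (seqV x z)) (y (seqV x z)) with h | h
  · exact le_trans (min_le_left _ _) (Nat.sInf_le h)
  · have h' : y (seqV x z) ≠ z (seqV x z) := by rw [← h]; exact hmem
    exact le_trans (min_le_right _ _) (Nat.sInf_le h')

/-- The sequentially metrized Cantor space `(2^ℕ, d_α)` for a shrinking sequence `α`. -/
def seqMetricSpace (α : ℕ → ℝ) (hα : IsShrinking α) : MetricSpace (ℕ → Bool) where
  dist := seqDist α
  dist_self x := seqDist_self α x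
  dist_comm x y := by
    show seqDist α x y = seqDist α y x
    rcases eq_or_ne x y with h | h
    · rw [h]
    · rw [seqDist_of_ne α h, seqDist_of_ne α h.symm, seqV_comm]
  dist_triangle x y z := by
    show seqDist α x z ≤ seqDist α x y + seqDist α y z
    rcases eq_or_ne x z with hxz | hxz
    · rw [hxz, seqDist_self]
      exact add_nonneg (seqDist_nonneg hα.1 _ _) (seqDist_nonneg hα.1 _ _)
    rcases eq_or_ne x y with hxy | hxy
    · subst hxy
      rw [seqDist_self, zero_add]
    rcases eq_or_ne y z with hyz | hyz
    · subst hyz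
      rw [seqDist_self, add_zero]
    rw [seqDist_of_ne α hxz, seqDist_of_ne α hxy, seqDist_of_ne α hyz]
    have h1 : α (seqV x z) ≤ α (min (seqV x y) (seqV y z)) :=
      hα.2.1 _ _ (min_seqV_le hxz)
    rcases min_cases (seqV x y) (seqV y z) with ⟨he, _⟩ | ⟨he, _⟩
    · rw [he] at h1
      exact h1.trans (le_add_of_nonneg_right (hα.1 _).le)
    · rw [he] at h1
      exact h1.trans (le_add_of_nonneg_left (hα.1 _).le)
  eq_of_dist_eq_zero := by
    intro x y h
    by_contra hne
    have h' : seqDist α x y = 0 := h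
    rw [seqDist_of_ne α hne] at h'
    exact absurd h' (ne_of_gt (hα.1 _))

/-- The Assouad dimension of a metric space. -/
def assouadDim (X : Type*) [MetricSpace X] : ℝ≥0∞ :=
  sInf {d : ℝ≥0∞ | ∃ s : ℝ, 0 < s ∧ d = ENNReal.ofReal s ∧ ∃ K : ℝ, 0 < K ∧
    ∀ ε : ℝ, 0 < ε → ε < 2 → ∀ r : ℝ, 0 < r → ∀ x : X,
      ∃ c : Finset X, (c.card : ℝ) ≤ K * ε ^ (-s) ∧
        Metric.closedBall x r ⊆ ⋃ y ∈ c, Metric.closedBall y (ε * r)}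

/-- The Hausdorff dimension of (the whole of) a metric space. -/
def hausdorffDim (X : Type*) [MetricSpace X] : ℝ≥0∞ := dimH (Set.univ : Set X)

/-- The topology induced by a metric. -/
def metricTopology {X : Type*} (m : MetricSpace X) : TopologicalSpace X :=
  m.toPseudoMetricSpace.toUniformSpace.toTopologicalSpace

/-- `f : X → Y` is quasi-symmetric: for some self-homeomorphism `η` of `[0,∞)`,
`d(f x, f y)/d(f x, f z) ≤ η (d(x,y)/d(x,z))` for all distinct `x, y, z`. -/
def IsQuasiSymmetric {X Y : Type*} [MetricSpace X] [MetricSpace Y] (f : X → Y) : Prop :=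
  ∃ η : Homeomorph (Set.Ici (0 : ℝ)) (Set.Ici (0 : ℝ)),
    ∀ x y z : X, x ≠ y → x ≠ z → y ≠ z →
      dist (f x) (f y) / dist (f x) (f z) ≤
        (η ⟨dist x y / dist x z, div_nonneg dist_nonneg dist_nonneg⟩ : ℝ)

/-- Two metric spaces (given by explicit metric structures) are quasi-symmetrically
equivalent if there is a quasi-symmetric homeomorphism between them. -/
def QSEquiv (X Y : Type*) (mX : MetricSpace X) (mY : MetricSpace Y) : Prop :=
  ∃ f : @Homeomorph X Y (metricTopology mX) (metricTopology mY),
    @IsQuasiSymmetric X Y mX mY f.toEquiv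


/-- The `ℓ^∞`-product metric (the sup metric) on `X × Y`. -/
def prodMetric {X Y : Type*} (mX : MetricSpace X) (mY : MetricSpace Y) :
    MetricSpace (X × Y) :=
  letI := mX; letI := mY; Prod.metricSpaceMax

/-!
The space is `X = {0} ∪ ⋃ₙ 4⁻ⁿ (1 + C_{rₙ}) ⊆ ℝ`, where `C_r` is the self-similar Cantor set of
ratio `r` in `[0, 1]` and `rₙ ↑ 1/2` with `1 - 2 rₙ = 1 / (n + 2)`. As a subset of `ℝ` it is
doubling, and it is the image of `2^ℕ` under the continuous injection `1ⁿ0y ↦ 4⁻ⁿ (1 + C_{rₙ}(y))`,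
`1^∞ ↦ 0`, hence a Cantor space. The first gap of `C_r` has relative size `1 - 2r`, which makes
`C_r` uniformly disconnected for `r < 1/2`; a point `x ≠ 0` therefore has a uniformly disconnected
neighbourhood, a small ball that only meets the level of `x`. On the other hand `C_{rₙ}` is
`1 / (n + 2)`-dense in `[0, 1]`, so the levels accumulating at `0` contain nontrivial `δ`-chains
for every `δ > 0`. Uniform perfectness comes from `rₙ ≥ 1/4` and the factor `4` between
consecutive levels.
-/

open Topology

section Chains

variable {Y Z : Type*} [MetricSpace Y] [MetricSpace Z]

def IsUniformlyDisconnectedWithOn (t : Set Y) (δ : ℝ) : Prop :=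
  ∀ (N : ℕ) (x : ℕ → Y), (∀ i, x i ∈ t) →
    (∀ i : ℕ, 1 ≤ i → i ≤ N → dist (x (i - 1)) (x i) ≤ δ * dist (x 0) (x N)) →
    ∀ i ≤ N, x i = x 0

theorem apply_eq_apply_zero_of_pred_eq {α : Type*} {f : ℕ → α} {N : ℕ}
    (h : ∀ i, 1 ≤ i → i ≤ N → f (i - 1) = f i) : ∀ i ≤ N, f i = f 0 := by
  intro i hi
  induction i with
  | zero => rfl
  | succ i ih => rw [← h (i + 1) (by omega) hi, Nat.add_sub_cancel, ih (by omega)]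

theorem exists_pred_ne_of_ne {α : Type*} {f : ℕ → α} {N : ℕ} (h : f N ≠ f 0) :
    ∃ i, 1 ≤ i ∧ i ≤ N ∧ f (i - 1) ≠ f i := by
  by_contra! h'
  exact h (apply_eq_apply_zero_of_pred_eq h' N le_rfl)

theorem IsUniformlyDisconnectedWithOn.of_endpoints_eq {t : Set Y} {δ : ℝ}
    (h : ∀ (N : ℕ) (x : ℕ → Y), (∀ i, x i ∈ t) →
      (∀ i : ℕ, 1 ≤ i → i ≤ N → dist (x (i - 1)) (x i) ≤ δ * dist (x 0) (x N)) → x N = x 0) :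
    IsUniformlyDisconnectedWithOn t δ := by
  intro N x hx hchain
  have hN := h N x hx hchain
  refine apply_eq_apply_zero_of_pred_eq fun i hi hiN => dist_le_zero.1 ?_
  simpa [hN] using hchain i hi hiN

theorem IsUniformlyDisconnectedWithOn.mono {s t : Set Y} {δ δ' : ℝ}
    (h : IsUniformlyDisconnectedWithOn t δ) (hst : s ⊆ t) (hδ : δ' ≤ δ) :
    IsUniformlyDisconnectedWithOn s δ' := fun N x hx hchain =>
  h N x (fun i => hst (hx i)) fun i hi hiN =>
    (hchain i hi hiN).trans (mul_le_mul_of_nonneg_right hδ dist_nonneg)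

theorem Isometry.isUniformlyDisconnectedWith_iff {f : Z → Y} (hf : Isometry f) {δ : ℝ} :
    IsUniformlyDisconnectedWith Z δ ↔ IsUniformlyDisconnectedWithOn (range f) δ := by
  constructor
  · intro h N x hx hchain
    choose z hz using hx
    obtain rfl : x = f ∘ z := funext fun i => (hz i).symm
    intro i hi
    exact congrArg f <| h N z
      (fun i hi hiN => by simpa only [Function.comp, hf.dist_eq] using hchain i hi hiN) i hi
  · intro h N z hchain i hi
    refine hf.injective <| h N (f ∘ z) (fun i => mem_range_self _) (fun i hi hiN => ?_) i hi
    simpa only [Function.comp, hf.dist_eq] using hchain i hi hiN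

/-- The chain: points of `T` near the `N + 1` equally spaced points of the interval. -/
theorem not_isUniformlyDisconnectedWithOn_of_dense {T : Set ℝ} {a h : ℝ} (hh : 0 < h) {N : ℕ}
    (hN : 4 ≤ N) (hT : ∀ u ∈ Icc a (a + h), ∃ t ∈ T, |t - u| ≤ h / N) :
    ¬ IsUniformlyDisconnectedWithOn T (6 / N) := by
  have hN0 : (4 : ℝ) ≤ N := by exact_mod_cast hN
  set ε := h / N with hε
  have hNε : N * ε = h := by rw [hε]; field_simp
  have hε0 : 0 < ε := by positivity
  have hu : ∀ i : ℕ, a + (min i N : ℕ) * ε ∈ Icc a (a + h) := fun i => by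
    have : ((min i N : ℕ) : ℝ) ≤ N := by exact_mod_cast min_le_right i N
    constructor <;> nlinarith
  choose c hcT hc using fun i => hT _ (hu i)
  have hmin : ∀ i ≤ N, ((min i N : ℕ) : ℝ) = i := fun i hi => by rw [min_eq_left hi]
  have hc0 : |c 0 - a| ≤ ε := by simpa using hc 0
  have hcN : |c N - (a + h)| ≤ ε := by simpa [hmin N le_rfl, hNε] using hc N
  have hstep : ∀ i, 1 ≤ i → i ≤ N → |c (i - 1) - c i| ≤ 3 * ε := fun i hi hiN => by
    have hci : |c i - (a + i * ε)| ≤ ε := by simpa [hmin i hiN] using hc i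
    have hci' : |c (i - 1) - (a + (i - 1 : ℕ) * ε)| ≤ ε := by
      simpa [hmin (i - 1) (by omega)] using hc (i - 1)
    rw [Nat.cast_sub hi, Nat.cast_one] at hci'
    rw [abs_le] at hci hci' ⊢
    constructor <;> nlinarith
  have hends : h / 2 ≤ |c N - c 0| := by
    rw [abs_le] at hc0 hcN
    rw [le_abs]
    left
    nlinarith
  intro hUD
  have hconst := hUD N c hcT (fun i hi hiN => ?_) N le_rfl
  · rw [hconst, sub_self, abs_zero] at hends
    linarith
  · rw [Real.dist_eq, Real.dist_eq, abs_sub_comm (c 0)]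
    calc |c (i - 1) - c i| ≤ 3 * ε := hstep i hi hiN
      _ = 6 / N * (h / 2) := by rw [hε]; field_simp; ring
      _ ≤ 6 / N * |c N - c 0| := by gcongr

end Chains

theorem exists_finset_cover_closedBall {X ι : Type*} [MetricSpace X] {S : Set X} {ρ : ℝ}
    (I : Finset ι) (A : ι → Set X) (hS : S ⊆ ⋃ i ∈ I, A i)
    (hA : ∀ i ∈ I, ∀ a ∈ A i, ∀ b ∈ A i, dist a b ≤ ρ) :
    ∃ c : Finset X, c.card ≤ I.card ∧ S ⊆ ⋃ y ∈ c, closedBall y ρ := by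
  classical
  rcases isEmpty_or_nonempty X with hX | hX
  · exact ⟨∅, by simp, fun x => isEmptyElim x⟩
  refine ⟨I.image fun i => Classical.epsilon (· ∈ A i), Finset.card_image_le, fun z hz => ?_⟩
  obtain ⟨i, hi, hzi⟩ := mem_iUnion₂.1 (hS hz)
  exact mem_iUnion₂.2 ⟨_, Finset.mem_image_of_mem _ hi,
    hA i hi _ hzi _ (Classical.epsilon_spec ⟨z, hzi⟩)⟩

theorem isDoubling_subset_real (S : Set ℝ) : IsDoubling S := by
  refine ⟨4, fun x r => ?_⟩
  set A : ℕ → Set S := fun j => (↑) ⁻¹' Icc (x - r + j * (r / 2)) (x - r + (j + 1) * (r / 2))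
  have hcov : closedBall x r ⊆ ⋃ j ∈ Finset.range 4, A j := by
    intro z hz
    rw [mem_closedBall, Subtype.dist_eq, Real.dist_eq, abs_le] at hz
    simp only [A, mem_iUnion, Finset.mem_range, mem_preimage, mem_Icc, exists_prop]
    by_cases h0 : (z : ℝ) ≤ x - r / 2
    · exact ⟨0, by norm_num, by push_cast; constructor <;> linarith⟩
    by_cases h1 : (z : ℝ) ≤ x
    · exact ⟨1, by norm_num, by push_cast; constructor <;> linarith⟩
    by_cases h2 : (z : ℝ) ≤ x + r / 2
    · exact ⟨2, by norm_num, by push_cast; constructor <;> linarith⟩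
    · exact ⟨3, by norm_num, by push_cast; constructor <;> linarith⟩
  have hA : ∀ j ∈ Finset.range 4, ∀ a ∈ A j, ∀ b ∈ A j, dist a b ≤ r / 2 := by
    intro j _ a ha b hb
    rw [Subtype.dist_eq]
    convert Real.dist_le_of_mem_Icc ha hb using 1
    ring
  obtain ⟨c, hc, hc'⟩ := exists_finset_cover_closedBall _ A hcov hA
  exact ⟨c, hc.trans (by simp), hc'⟩

theorem seqV_le {y w : ℕ → Bool} {k : ℕ} (h : y k ≠ w k) : seqV y w ≤ k := Nat.sInf_le h

theorem eq_of_lt_seqV {y w : ℕ → Bool} {i : ℕ} (h : i < seqV y w) : y i = w i :=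
  not_not.1 (Nat.notMem_of_lt_sInf h)

theorem apply_seqV_ne {y w : ℕ → Bool} (h : y ≠ w) : y (seqV y w) ≠ w (seqV y w) :=
  Nat.sInf_mem (Function.ne_iff.1 h)

/-- For `r < 1/2`, a parametrisation of the self-similar Cantor set `C_r ⊆ [0, 1]` of ratio `r`. -/
def cantorMap (r : ℝ) (y : ℕ → Bool) : ℝ := ∑' i, if y i then (1 - r) * r ^ i else 0

section CantorMap

variable {r : ℝ}

theorem tsum_one_sub_mul_pow (hr0 : 0 ≤ r) (hr1 : r < 1) : ∑' i : ℕ, (1 - r) * r ^ i = 1 := by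
  rw [tsum_mul_left, tsum_geometric_of_lt_one hr0 hr1, mul_inv_cancel₀ (by linarith)]

theorem cantorMap_term_nonneg (hr0 : 0 ≤ r) (hr1 : r < 1) (y : ℕ → Bool) (i : ℕ) :
    0 ≤ if y i then (1 - r) * r ^ i else 0 := by
  have : 0 ≤ (1 - r) * r ^ i := mul_nonneg (by linarith) (pow_nonneg hr0 i)
  split_ifs <;> simp [this]

theorem cantorMap_term_le (hr0 : 0 ≤ r) (hr1 : r < 1) (y : ℕ → Bool) (i : ℕ) :
    (if y i then (1 - r) * r ^ i else 0) ≤ (1 - r) * r ^ i := by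
  have : 0 ≤ (1 - r) * r ^ i := mul_nonneg (by linarith) (pow_nonneg hr0 i)
  split_ifs <;> simp [this]

theorem summable_cantorMap (hr0 : 0 ≤ r) (hr1 : r < 1) (y : ℕ → Bool) :
    Summable fun i => if y i then (1 - r) * r ^ i else 0 :=
  .of_nonneg_of_le (cantorMap_term_nonneg hr0 hr1 y) (cantorMap_term_le hr0 hr1 y)
    ((summable_geometric_of_lt_one hr0 hr1).mul_left _)

theorem cantorMap_nonneg (hr0 : 0 ≤ r) (hr1 : r < 1) (y : ℕ → Bool) : 0 ≤ cantorMap r y :=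
  tsum_nonneg (cantorMap_term_nonneg hr0 hr1 y)

theorem cantorMap_le_one (hr0 : 0 ≤ r) (hr1 : r < 1) (y : ℕ → Bool) : cantorMap r y ≤ 1 :=
  (Summable.tsum_le_tsum (cantorMap_term_le hr0 hr1 y) (summable_cantorMap hr0 hr1 y)
    ((summable_geometric_of_lt_one hr0 hr1).mul_left _)).trans_eq (tsum_one_sub_mul_pow hr0 hr1)

@[simp]
theorem cantorMap_const_false : cantorMap r (fun _ => false) = 0 := by
  simp [cantorMap]

theorem cantorMap_const_true (hr0 : 0 ≤ r) (hr1 : r < 1) : cantorMap r (fun _ => true) = 1 := by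
  simpa [cantorMap] using tsum_one_sub_mul_pow hr0 hr1

theorem continuous_cantorMap (hr0 : 0 ≤ r) (hr1 : r < 1) : Continuous (cantorMap r) := by
  refine continuous_tsum (fun i => (continuous_of_discreteTopology
    (f := fun b : Bool => if b then (1 - r) * r ^ i else 0)).comp (continuous_apply i))
    ((summable_geometric_of_lt_one hr0 hr1).mul_left (1 - r)) fun i y => ?_
  rw [Real.norm_of_nonneg (cantorMap_term_nonneg hr0 hr1 y i)]
  exact cantorMap_term_le hr0 hr1 y i

theorem cantorMap_eq_sum_add_shift (hr0 : 0 ≤ r) (hr1 : r < 1) (y : ℕ → Bool) (k : ℕ) :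
    cantorMap r y = ∑ i ∈ Finset.range k, (if y i then (1 - r) * r ^ i else 0) +
      r ^ k * cantorMap r (fun i => y (i + k)) := by
  rw [cantorMap, ← (summable_cantorMap hr0 hr1 y).sum_add_tsum_nat_add k, cantorMap,
    ← tsum_mul_left]
  congr 2 with i
  split_ifs <;> ring

theorem cantorMap_cons (hr0 : 0 ≤ r) (hr1 : r < 1) (b : Bool) (y : ℕ → Bool) :
    cantorMap r (fun i => if i = 0 then b else y (i - 1)) =
      (if b then 1 - r else 0) + r * cantorMap r y := by
  rw [cantorMap_eq_sum_add_shift hr0 hr1 _ 1]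
  simp

theorem abs_cantorMap_sub_le (hr0 : 0 ≤ r) (hr1 : r < 1) {y w : ℕ → Bool} {k : ℕ}
    (h : ∀ i < k, y i = w i) : |cantorMap r y - cantorMap r w| ≤ r ^ k := by
  rw [cantorMap_eq_sum_add_shift hr0 hr1 y k, cantorMap_eq_sum_add_shift hr0 hr1 w k,
    Finset.sum_congr rfl fun i hi => by rw [h i (Finset.mem_range.1 hi)], add_sub_add_left_eq_sub,
    ← mul_sub, abs_mul, abs_of_nonneg (pow_nonneg hr0 k)]
  have hy := cantorMap_nonneg hr0 hr1 (fun i => y (i + k))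
  have hy' := cantorMap_le_one hr0 hr1 (fun i => y (i + k))
  have hw := cantorMap_nonneg hr0 hr1 (fun i => w (i + k))
  have hw' := cantorMap_le_one hr0 hr1 (fun i => w (i + k))
  exact mul_le_of_le_one_right (pow_nonneg hr0 k) (abs_sub_le_iff.2 ⟨by linarith, by linarith⟩)

/-- The digit at which `y` and `w` first differ contributes `(1 - r) rᵏ`, more than the
`rᵏ⁺¹` that all later digits can make up for. -/
theorem le_abs_cantorMap_sub (hr0 : 0 ≤ r) (hr1 : r < 1) {y w : ℕ → Bool} {k : ℕ}
    (h : ∀ i < k, y i = w i) (hk : y k ≠ w k) :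
    (1 - 2 * r) * r ^ k ≤ |cantorMap r y - cantorMap r w| := by
  set y' := fun i => y (i + (k + 1))
  set w' := fun i => w (i + (k + 1))
  have hdiff : cantorMap r y - cantorMap r w =
      ((if y k then (1 - r) * r ^ k else 0) - (if w k then (1 - r) * r ^ k else 0)) +
        r ^ (k + 1) * (cantorMap r y' - cantorMap r w') := by
    rw [cantorMap_eq_sum_add_shift hr0 hr1 y (k + 1), cantorMap_eq_sum_add_shift hr0 hr1 w (k + 1),
      Finset.sum_range_succ, Finset.sum_range_succ,
      Finset.sum_congr rfl fun i hi => by rw [h i (Finset.mem_range.1 hi)]]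
    ring
  have hdigit : |(if y k then (1 - r) * r ^ k else 0) - (if w k then (1 - r) * r ^ k else 0)| =
      (1 - r) * r ^ k := by
    have : 0 ≤ (1 - r) * r ^ k := mul_nonneg (by linarith) (pow_nonneg hr0 k)
    cases hy : y k <;> cases hw : w k <;>
      simp_all [abs_mul, abs_of_nonneg hr0, abs_of_nonneg (sub_nonneg.2 hr1.le)]
  have htail : |r ^ (k + 1) * (cantorMap r y' - cantorMap r w')| ≤ r ^ (k + 1) := by
    rw [abs_mul, abs_of_nonneg (pow_nonneg hr0 _)]
    exact mul_le_of_le_one_right (pow_nonneg hr0 _)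
      (by simpa using abs_cantorMap_sub_le hr0 hr1 (y := y') (w := w') (k := 0) (by simp))
  rw [hdiff]
  linarith [abs_sub_abs_le_abs_add
    ((if y k then (1 - r) * r ^ k else 0) - (if w k then (1 - r) * r ^ k else 0))
    (r ^ (k + 1) * (cantorMap r y' - cantorMap r w')), pow_succ r k]

theorem cantorMap_injective (hr0 : 0 < r) (hr : r < 1 / 2) : Function.Injective (cantorMap r) := by
  intro y w hyw
  by_contra hne
  have := le_abs_cantorMap_sub hr0.le (by linarith) (fun i => eq_of_lt_seqV) (apply_seqV_ne hne)
  rw [hyw, sub_self, abs_zero] at this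
  nlinarith [pow_pos hr0 (seqV y w)]

theorem abs_cantorMap_update_sub (hr0 : 0 ≤ r) (hr1 : r < 1) (y : ℕ → Bool) (k : ℕ) :
    |cantorMap r (Function.update y k (!y k)) - cantorMap r y| = (1 - r) * r ^ k := by
  rw [cantorMap, cantorMap,
    ← (summable_cantorMap hr0 hr1 _).tsum_sub (summable_cantorMap hr0 hr1 y),
    tsum_eq_single k fun i hi => by simp [Function.update_of_ne hi]]
  have : 0 ≤ (1 - r) * r ^ k := mul_nonneg (by linarith) (pow_nonneg hr0 k)
  cases y k <;> simp [abs_of_nonneg this]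

/-- Changing the `k`-th digit moves the point by `(1 - r) rᵏ`, and consecutive such distances
differ by the factor `r ≥ 1/4`. -/
theorem exists_abs_cantorMap_sub_mem_Icc (hr : 1 / 4 ≤ r) (hr' : r < 1 / 2) (y : ℕ → Bool) {s : ℝ}
    (hs0 : 0 < s) (hs1 : s ≤ 1) :
    ∃ w, s / 4 ≤ |cantorMap r w - cantorMap r y| ∧ |cantorMap r w - cantorMap r y| ≤ s := by
  have hr0 : 0 < r := by linarith
  suffices ∃ k : ℕ, s / 4 ≤ (1 - r) * r ^ k ∧ (1 - r) * r ^ k ≤ s by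
    obtain ⟨k, hk⟩ := this
    exact ⟨_, by rwa [abs_cantorMap_update_sub hr0.le (by linarith) y k]⟩
  by_cases h : 1 - r ≤ s
  · exact ⟨0, by rw [pow_zero, mul_one]; linarith, by rwa [pow_zero, mul_one]⟩
  have h1r : 0 < 1 - r := by linarith
  obtain ⟨n, hn1, hn2⟩ := exists_nat_pow_near_of_lt_one (div_pos hs0 h1r)
    ((div_le_one h1r).2 (not_le.1 h).le) hr0 (by linarith)
  rw [lt_div_iff₀ h1r] at hn1
  rw [div_le_iff₀ h1r] at hn2
  refine ⟨n + 1, ?_, by linarith⟩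
  rw [pow_succ]
  nlinarith

theorem exists_abs_cantorMap_sub_le_max (hr0 : 0 < r) (hr : r < 1 / 2) (k : ℕ) :
    ∀ u ∈ Icc (0 : ℝ) 1, ∃ y, |cantorMap r y - u| ≤ max (1 - 2 * r) (r ^ k) := by
  induction k with
  | zero =>
    intro u hu
    refine ⟨fun _ => false, ?_⟩
    rw [cantorMap_const_false, zero_sub, abs_neg, abs_of_nonneg hu.1, pow_zero]
    exact hu.2.trans (le_max_right _ _)
  | succ k ih =>
    have hcons : ∀ (b : Bool), ∀ v ∈ Icc (0 : ℝ) 1, ∃ y,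
        |cantorMap r y - ((if b then 1 - r else 0) + r * v)| ≤ max (1 - 2 * r) (r ^ (k + 1)) := by
      intro b v hv
      obtain ⟨y, hy⟩ := ih v hv
      refine ⟨fun i => if i = 0 then b else y (i - 1), ?_⟩
      rw [cantorMap_cons hr0.le (by linarith) b y, add_sub_add_left_eq_sub, ← mul_sub, abs_mul,
        abs_of_pos hr0]
      calc r * |cantorMap r y - v| ≤ r * max (1 - 2 * r) (r ^ k) := by gcongr
        _ = max (r * (1 - 2 * r)) (r ^ (k + 1)) := by rw [mul_max_of_nonneg _ _ hr0.le, pow_succ']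
        _ ≤ _ := max_le_max (by nlinarith) le_rfl
    intro u hu
    rcases le_or_gt u r with hur | hur
    · obtain ⟨y, hy⟩ := hcons false (u / r) ⟨div_nonneg hu.1 hr0.le, (div_le_one hr0).2 hur⟩
      refine ⟨y, ?_⟩
      simpa [mul_div_cancel₀ _ hr0.ne'] using hy
    rcases le_or_gt (1 - r) u with hur' | hur'
    · obtain ⟨y, hy⟩ := hcons true ((u - (1 - r)) / r)
        ⟨div_nonneg (by linarith) hr0.le, (div_le_one hr0).2 (by linarith [hu.2])⟩
      refine ⟨y, ?_⟩
      simpa [mul_div_cancel₀ _ hr0.ne'] using hy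
    · refine ⟨fun i => if i = 0 then false else true, le_max_of_le_left ?_⟩
      rw [cantorMap_cons hr0.le (by linarith) false (fun _ => true),
        cantorMap_const_true hr0.le (by linarith), abs_le]
      constructor <;> simp <;> linarith

theorem exists_abs_cantorMap_sub_le (hr0 : 0 < r) (hr : r < 1 / 2) {u : ℝ} (hu : u ∈ Icc 0 1) :
    ∃ y, |cantorMap r y - u| ≤ 1 - 2 * r := by
  obtain ⟨k, hk⟩ := exists_pow_lt_of_lt_one (by linarith : 0 < 1 - 2 * r) (by linarith : r < 1)
  obtain ⟨y, hy⟩ := exists_abs_cantorMap_sub_le_max hr0 hr k u hu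
  exact ⟨y, hy.trans (max_le le_rfl hk.le)⟩

end CantorMap

/-- Some step of the chain changes the digit at which `y₀` and `y_N` first differ; by
`le_abs_cantorMap_sub` that step is at least `1 - 2r` times as long as the whole chain. -/
theorem isUniformlyDisconnectedWithOn_range_cantorMap {r a b δ : ℝ} (hr0 : 0 ≤ r) (hr : r < 1 / 2)
    (ha : 0 < a) (hδ : δ < 1 - 2 * r) :
    IsUniformlyDisconnectedWithOn (range fun y => a * (b + cantorMap r y)) δ := by
  refine IsUniformlyDisconnectedWithOn.of_endpoints_eq fun N z hz hchain => ?_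
  choose y hy using hz
  have hdist : ∀ i j, dist (z i) (z j) = a * |cantorMap r (y i) - cantorMap r (y j)| := by
    intro i j
    rw [← hy i, ← hy j, Real.dist_eq, ← mul_sub, add_sub_add_left_eq_sub, abs_mul, abs_of_pos ha]
  by_contra hne
  have hy0N : y 0 ≠ y N := fun h => hne (by rw [← hy, ← hy, h])
  set k := seqV (y 0) (y N)
  obtain ⟨i, hi, hiN, hik⟩ := exists_pred_ne_of_ne (f := fun j => y j k) (apply_seqV_ne hy0N).symm
  have hupper : |cantorMap r (y 0) - cantorMap r (y N)| ≤ r ^ k :=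
    abs_cantorMap_sub_le hr0 (by linarith) fun j => eq_of_lt_seqV
  have hlower : (1 - 2 * r) * r ^ k ≤ |cantorMap r (y (i - 1)) - cantorMap r (y i)| :=
    calc (1 - 2 * r) * r ^ k ≤ (1 - 2 * r) * r ^ seqV (y (i - 1)) (y i) :=
          mul_le_mul_of_nonneg_left (pow_le_pow_of_le_one hr0 (by linarith) (seqV_le hik))
            (by linarith)
      _ ≤ _ := le_abs_cantorMap_sub hr0 (by linarith) (fun j => eq_of_lt_seqV)
          (apply_seqV_ne fun h => hik (congrFun h k))
  have hpos : 0 < |cantorMap r (y 0) - cantorMap r (y N)| := by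
    have := dist_pos.2 (Ne.symm hne)
    rw [hdist] at this
    exact pos_of_mul_pos_right this ha.le
  have hstep := hchain i hi hiN
  rw [hdist, hdist, mul_left_comm] at hstep
  have := le_of_mul_le_mul_left hstep ha
  nlinarith

/-- Chosen so that `1 - 2 * levelRatio n = 1 / (n + 2)`, the relative size of the first gap of
the `n`-th level, tends to `0`. -/
def levelRatio (n : ℕ) : ℝ := (n + 1) / (2 * (n + 2))

theorem one_sub_two_mul_levelRatio (n : ℕ) : 1 - 2 * levelRatio n = 1 / (n + 2) := by
  rw [levelRatio]
  field_simp
  ring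

theorem quarter_le_levelRatio (n : ℕ) : 1 / 4 ≤ levelRatio n := by
  rw [levelRatio, div_le_div_iff₀ (by norm_num) (by positivity)]
  linarith [(n.cast_nonneg : (0 : ℝ) ≤ n)]

theorem levelRatio_pos (n : ℕ) : 0 < levelRatio n := by linarith [quarter_le_levelRatio n]

theorem levelRatio_lt_half (n : ℕ) : levelRatio n < 1 / 2 := by
  have := one_sub_two_mul_levelRatio n
  have : (0 : ℝ) < 1 / (n + 2) := by positivity
  linarith

def levelPoint (n : ℕ) (y : ℕ → Bool) : ℝ := 4⁻¹ ^ n * (1 + cantorMap (levelRatio n) y)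

theorem levelPoint_mem_Icc (n : ℕ) (y : ℕ → Bool) :
    levelPoint n y ∈ Icc (4⁻¹ ^ n) (2 * 4⁻¹ ^ n) := by
  have h0 := cantorMap_nonneg (levelRatio_pos n).le (by linarith [levelRatio_lt_half n]) y
  have h1 := cantorMap_le_one (levelRatio_pos n).le (by linarith [levelRatio_lt_half n]) y
  have : (0 : ℝ) < 4⁻¹ ^ n := by positivity
  constructor <;> rw [levelPoint] <;> nlinarith

theorem levelPoint_const_false (n : ℕ) : levelPoint n (fun _ => false) = 4⁻¹ ^ n := by
  simp [levelPoint]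

theorem levelPoint_const_true (n : ℕ) : levelPoint n (fun _ => true) = 2 * 4⁻¹ ^ n := by
  rw [levelPoint, cantorMap_const_true (levelRatio_pos n).le (by linarith [levelRatio_lt_half n])]
  ring

theorem two_mul_inv_four_pow_le {m n : ℕ} (h : m < n) : 2 * (4 : ℝ)⁻¹ ^ n ≤ 4⁻¹ ^ m / 2 := by
  have : (4 : ℝ)⁻¹ ^ n ≤ 4⁻¹ ^ (m + 1) := pow_le_pow_of_le_one (by norm_num) (by norm_num) h
  rw [pow_succ] at this
  have : (0 : ℝ) < 4⁻¹ ^ m := by positivity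
  linarith

theorem inv_four_pow_div_four_le_abs_levelPoint_sub {m n : ℕ} (hmn : m ≠ n) (y w : ℕ → Bool) :
    4⁻¹ ^ n / 4 ≤ |levelPoint m w - levelPoint n y| := by
  have hm := levelPoint_mem_Icc m w
  have hn := levelPoint_mem_Icc n y
  have : (0 : ℝ) < 4⁻¹ ^ n := by positivity
  rcases lt_or_gt_of_ne hmn with h | h
  · have := two_mul_inv_four_pow_le h
    rw [le_abs]
    left
    linarith [hm.1, hn.2]
  · have := two_mul_inv_four_pow_le h
    rw [le_abs]
    right
    linarith [hm.2, hn.1]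

theorem levelPoint_inj {m n : ℕ} {y w : ℕ → Bool} (h : levelPoint m w = levelPoint n y) :
    m = n ∧ w = y := by
  by_cases hmn : m = n
  · subst hmn
    refine ⟨rfl, cantorMap_injective (levelRatio_pos m) (levelRatio_lt_half m) ?_⟩
    have : (4 : ℝ)⁻¹ ^ m ≠ 0 := by positivity
    simpa [levelPoint, this] using h
  · have := inv_four_pow_div_four_le_abs_levelPoint_sub hmn y w
    rw [h, sub_self, abs_zero] at this
    have : (0 : ℝ) < 4⁻¹ ^ n := by positivity
    linarith

def levelCode (n : ℕ) (y : ℕ → Bool) : ℕ → Bool :=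
  fun i => if i < n then true else if i = n then false else y (i - (n + 1))

def cantorEmbedding (x : ℕ → Bool) : ℝ :=
  open Classical in
  if h : ∃ n, x n = false then levelPoint (Nat.find h) (fun i => x (i + (Nat.find h + 1))) else 0

theorem cantorEmbedding_const_true : cantorEmbedding (fun _ => true) = 0 := by
  simp [cantorEmbedding]

theorem cantorEmbedding_levelCode (n : ℕ) (y : ℕ → Bool) :
    cantorEmbedding (levelCode n y) = levelPoint n y := by
  classical
  have h : ∃ m, levelCode n y m = false := ⟨n, by simp [levelCode]⟩
  have hfind : Nat.find h = n :=
    (Nat.find_eq_iff h).2 ⟨by simp [levelCode], fun m hm => by simp [levelCode, hm]⟩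
  rw [cantorEmbedding, dif_pos h, hfind]
  congr 1 with i
  simp only [levelCode, if_neg (by omega : ¬i + (n + 1) < n), if_neg (by omega : i + (n + 1) ≠ n),
    Nat.add_sub_cancel]

theorem levelCode_shift {n : ℕ} {x : ℕ → Bool} (h : ∀ i < n, x i = true) (hn : x n = false) :
    x = levelCode n (fun i => x (i + (n + 1))) := by
  funext i
  rcases lt_trichotomy i n with hi | rfl | hi
  · simp [levelCode, hi, h i hi]
  · simp [levelCode, hn]
  · simp only [levelCode, if_neg (show ¬i < n by omega), if_neg (show i ≠ n by omega)]
    congr 1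
    omega

theorem eq_const_true_or_levelCode (x : ℕ → Bool) :
    x = (fun _ => true) ∨ ∃ n y, x = levelCode n y := by
  classical
  by_cases h : ∃ n, x n = false
  · exact .inr ⟨_, _,
      levelCode_shift (fun i hi => by simpa using Nat.find_min h hi) (Nat.find_spec h)⟩
  · push Not at h
    exact .inl (funext fun i => by simpa using h i)

theorem mem_range_cantorEmbedding {t : ℝ} :
    t ∈ range cantorEmbedding ↔ t = 0 ∨ ∃ n y, levelPoint n y = t := by
  constructor
  · rintro ⟨x, rfl⟩
    rcases eq_const_true_or_levelCode x with rfl | ⟨n, y, rfl⟩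
    · exact .inl cantorEmbedding_const_true
    · exact .inr ⟨n, y, (cantorEmbedding_levelCode n y).symm⟩
  · rintro (rfl | ⟨n, y, rfl⟩)
    · exact ⟨_, cantorEmbedding_const_true⟩
    · exact ⟨_, cantorEmbedding_levelCode n y⟩

theorem range_cantorEmbedding_subset_Icc : range cantorEmbedding ⊆ Icc 0 2 := by
  intro t ht
  rcases mem_range_cantorEmbedding.1 ht with rfl | ⟨n, y, rfl⟩
  · simp
  · obtain ⟨h1, h2⟩ := levelPoint_mem_Icc n y
    have : (4 : ℝ)⁻¹ ^ n ≤ 1 := pow_le_one₀ (by norm_num) (by norm_num)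
    have : (0 : ℝ) ≤ 4⁻¹ ^ n := by positivity
    constructor <;> linarith

theorem cantorEmbedding_injective : Function.Injective cantorEmbedding := by
  intro x x' h
  have hpos : ∀ n y, levelPoint n y ≠ 0 := fun n y =>
    (lt_of_lt_of_le (by positivity) (levelPoint_mem_Icc n y).1).ne'
  rcases eq_const_true_or_levelCode x with rfl | ⟨n, y, rfl⟩ <;>
    rcases eq_const_true_or_levelCode x' with rfl | ⟨m, w, rfl⟩
  · rfl
  · simp only [cantorEmbedding_const_true, cantorEmbedding_levelCode] at h
    exact absurd h.symm (hpos m w)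
  · simp only [cantorEmbedding_const_true, cantorEmbedding_levelCode] at h
    exact absurd h (hpos n y)
  · simp only [cantorEmbedding_levelCode] at h
    obtain ⟨rfl, rfl⟩ := levelPoint_inj h
    rfl

theorem eventually_forall_lt_eq (x : ℕ → Bool) (k : ℕ) : ∀ᶠ z in 𝓝 x, ∀ i < k, z i = x i := by
  simpa using (Filter.eventually_all_finite (finite_lt_nat k)).2 fun i _ =>
    (continuous_apply i).continuousAt.eventually_mem ((isOpen_discrete {x i}).mem_nhds rfl)

theorem cantorEmbedding_le_of_forall_lt_eq_true {k : ℕ} {x : ℕ → Bool} (h : ∀ i < k, x i = true) :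
    cantorEmbedding x ≤ 2 * 4⁻¹ ^ k := by
  rcases eq_const_true_or_levelCode x with rfl | ⟨n, y, rfl⟩
  · rw [cantorEmbedding_const_true]
    positivity
  · have hkn : k ≤ n := by
      by_contra! hnk
      simpa [levelCode] using h n hnk
    rw [cantorEmbedding_levelCode]
    exact (levelPoint_mem_Icc n y).2.trans (mul_le_mul_of_nonneg_left
      (pow_le_pow_of_le_one (by norm_num) (by norm_num) hkn) (by norm_num))

theorem continuous_cantorEmbedding : Continuous cantorEmbedding := by
  refine continuous_iff_continuousAt.2 fun x => ?_
  rcases eq_const_true_or_levelCode x with rfl | ⟨n, y, rfl⟩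
  · refine Metric.tendsto_nhds.2 fun ε hε => ?_
    obtain ⟨k, hk⟩ := exists_pow_lt_of_lt_one (half_pos hε) (by norm_num : (4 : ℝ)⁻¹ < 1)
    filter_upwards [eventually_forall_lt_eq (fun _ => true) k] with z hz
    rw [cantorEmbedding_const_true, Real.dist_0_eq_abs,
      abs_of_nonneg (range_cantorEmbedding_subset_Icc (mem_range_self z)).1]
    linarith [cantorEmbedding_le_of_forall_lt_eq_true hz]
  · have hlevel : Continuous fun z : ℕ → Bool => levelPoint n (fun i => z (i + (n + 1))) :=
      continuous_const.mul (continuous_const.add ((continuous_cantorMap (levelRatio_pos n).le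
        (by linarith [levelRatio_lt_half n])).comp (by fun_prop)))
    refine hlevel.continuousAt.congr ?_
    filter_upwards [eventually_forall_lt_eq (levelCode n y) (n + 1)] with z hz
    have hz' := levelCode_shift (n := n) (x := z)
      (fun i hi => by simpa [levelCode, hi] using hz i (by omega))
      (by simpa [levelCode] using hz n (by omega))
    exact (cantorEmbedding_levelCode n _).symm.trans (congrArg cantorEmbedding hz'.symm)

theorem levelPoint_mem_range (n : ℕ) (y : ℕ → Bool) : levelPoint n y ∈ range cantorEmbedding :=
  ⟨_, cantorEmbedding_levelCode n y⟩

theorem inv_two_pow_mem_range (m : ℕ) : (2 : ℝ)⁻¹ ^ m ∈ range cantorEmbedding := by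
  obtain ⟨k, rfl | rfl⟩ := Nat.even_or_odd' m
  · convert levelPoint_mem_range k (fun _ => false) using 1
    rw [levelPoint_const_false, pow_mul]
    norm_num
  · convert levelPoint_mem_range (k + 1) (fun _ => true) using 1
    rw [levelPoint_const_true, pow_succ, pow_succ, pow_mul]
    norm_num
    ring

theorem exists_levelPoint_eq_of_abs_sub_lt {t : ℝ} (ht : t ∈ range cantorEmbedding) {n : ℕ}
    {y : ℕ → Bool} (h : |t - levelPoint n y| < 4⁻¹ ^ n / 4) : ∃ w, levelPoint n w = t := by
  rcases mem_range_cantorEmbedding.1 ht with rfl | ⟨m, w, rfl⟩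
  · obtain ⟨h1, -⟩ := levelPoint_mem_Icc n y
    have : (0 : ℝ) < 4⁻¹ ^ n := by positivity
    rw [zero_sub, abs_neg, abs_of_pos (by linarith)] at h
    linarith
  · by_cases hmn : m = n
    · exact ⟨w, hmn ▸ rfl⟩
    · exact absurd h (not_lt.2 (inv_four_pow_div_four_le_abs_levelPoint_sub hmn y w))

theorem exists_inv_two_pow_mem_Icc {R : ℝ} (hR0 : 0 < R) (hR2 : R ≤ 2) :
    ∃ m : ℕ, (2 : ℝ)⁻¹ ^ m ∈ Icc (R / 2) R := by
  obtain ⟨m, hm1, hm2⟩ := exists_nat_pow_near_of_lt_one (half_pos hR0) (by linarith)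
    (by norm_num : (0 : ℝ) < 2⁻¹) (by norm_num)
  rw [pow_succ] at hm1
  exact ⟨m, hm2, by linarith⟩

/-- The witness is a dyadic point `2⁻ᵐ` when `x` is small compared with `R`, the point `0` when
`x` is comparable with `R`, and otherwise a point of the level of `x`, obtained by changing one
digit or by going to an end of the level. -/
theorem exists_mem_range_cantorEmbedding_annulus {x R : ℝ} (hx : x ∈ range cantorEmbedding)
    (hR0 : 0 < R) (hR2 : R ≤ 2) :
    ∃ z ∈ range cantorEmbedding, R / 4 ≤ |z - x| ∧ |z - x| ≤ R := by
  obtain ⟨x', rfl⟩ := hx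
  have hx0 := (range_cantorEmbedding_subset_Icc (mem_range_self x')).1
  by_cases h4 : 4 * cantorEmbedding x' < R
  · obtain ⟨m, hm1, hm2⟩ := exists_inv_two_pow_mem_Icc hR0 hR2
    refine ⟨_, inv_two_pow_mem_range m, ?_⟩
    rw [abs_of_nonneg (by linarith)]
    constructor <;> linarith
  by_cases hxR : cantorEmbedding x' ≤ R
  · refine ⟨0, ⟨_, cantorEmbedding_const_true⟩, ?_⟩
    rw [zero_sub, abs_neg, abs_of_nonneg hx0]
    constructor <;> linarith
  obtain ⟨n, y, hxy⟩ := (mem_range_cantorEmbedding.1 (mem_range_self x')).resolve_left (by linarith)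
  rw [← hxy] at h4 hxR ⊢
  obtain ⟨hq1, hq2⟩ := levelPoint_mem_Icc n y
  have hq : (0 : ℝ) < 4⁻¹ ^ n := by positivity
  by_cases hRq : R ≤ 4⁻¹ ^ n
  · obtain ⟨w, hw1, hw2⟩ := exists_abs_cantorMap_sub_mem_Icc (quarter_le_levelRatio n)
      (levelRatio_lt_half n) y (div_pos hR0 hq) ((div_le_one hq).2 hRq)
    refine ⟨_, levelPoint_mem_range n w, ?_⟩
    rw [levelPoint, levelPoint, ← mul_sub, add_sub_add_left_eq_sub, abs_mul, abs_of_pos hq]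
    rw [div_div, div_le_iff₀ (by positivity)] at hw1
    rw [le_div_iff₀ hq] at hw2
    constructor <;> nlinarith
  by_cases hmid : levelPoint n y ≤ 3 / 2 * 4⁻¹ ^ n
  · refine ⟨_, levelPoint_mem_range n (fun _ => true), ?_⟩
    rw [levelPoint_const_true, abs_of_nonneg (by linarith)]
    constructor <;> linarith
  · refine ⟨_, levelPoint_mem_range n (fun _ => false), ?_⟩
    rw [levelPoint_const_false, abs_of_nonpos (by linarith)]
    constructor <;> linarith

theorem diam_univ_range_cantorEmbedding_le :
    diam (univ : Set (range cantorEmbedding)) ≤ 2 := by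
  refine diam_le_of_forall_dist_le (by norm_num) fun x _ y _ => ?_
  have hx := range_cantorEmbedding_subset_Icc x.2
  have hy := range_cantorEmbedding_subset_Icc y.2
  rw [Subtype.dist_eq, Real.dist_eq, abs_le]
  constructor <;> linarith [hx.1, hx.2, hy.1, hy.2]

theorem isUniformlyPerfect_range_cantorEmbedding : IsUniformlyPerfect (range cantorEmbedding) := by
  refine ⟨1 / 4, by norm_num, by norm_num, fun x R hR0 hR => ?_⟩
  obtain ⟨z, hz, h1, h2⟩ := exists_mem_range_cantorEmbedding_annulus x.2 hR0
    (hR.trans_le diam_univ_range_cantorEmbedding_le).le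
  refine ⟨⟨z, hz⟩, ?_, ?_⟩
  · rwa [mem_closedBall, Subtype.dist_eq, Real.dist_eq]
  · rw [mem_ball, Subtype.dist_eq, Real.dist_eq, not_lt]
    linarith

theorem isUniformlyDisconnectedWithOn_range_levelPoint (n : ℕ) :
    IsUniformlyDisconnectedWithOn (range (levelPoint n)) (1 / (2 * (n + 2))) := by
  refine isUniformlyDisconnectedWithOn_range_cantorMap (levelRatio_pos n).le (levelRatio_lt_half n)
    (by positivity) ?_
  rw [one_sub_two_mul_levelRatio, one_div_lt_one_div (by positivity) (by positivity)]
  linarith [(n.cast_nonneg : (0 : ℝ) ≤ n)]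

theorem not_isUniformlyDisconnectedWithOn_range_levelPoint {n : ℕ} (hn : 2 ≤ n) :
    ¬ IsUniformlyDisconnectedWithOn (range (levelPoint n)) (6 / (n + 2)) := by
  have hq : (0 : ℝ) < 4⁻¹ ^ n := by positivity
  have := not_isUniformlyDisconnectedWithOn_of_dense (T := range (levelPoint n)) (a := 4⁻¹ ^ n) hq
    (N := n + 2) (by omega) fun u hu => ?_
  · simpa using this
  obtain ⟨y, hy⟩ := exists_abs_cantorMap_sub_le (levelRatio_pos n) (levelRatio_lt_half n)
    (u := u / 4⁻¹ ^ n - 1) ⟨by rw [sub_nonneg, le_div_iff₀ hq]; linarith [hu.1],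
      by rw [sub_le_iff_le_add, div_le_iff₀ hq]; linarith [hu.2]⟩
  refine ⟨levelPoint n y, mem_range_self y, ?_⟩
  rw [one_sub_two_mul_levelRatio] at hy
  calc |levelPoint n y - u| = 4⁻¹ ^ n * |cantorMap (levelRatio n) y - (u / 4⁻¹ ^ n - 1)| := by
        rw [← abs_of_pos hq, ← abs_mul, abs_of_pos hq, levelPoint]
        congr 1
        field_simp
        ring
    _ ≤ 4⁻¹ ^ n * (1 / (n + 2)) := by gcongr
    _ = 4⁻¹ ^ n / ((n + 2 : ℕ) : ℝ) := by push_cast; ring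

theorem not_isUniformlyDisconnectedWithOn_of_inter_ball_zero_subset {t : Set ℝ} {ε δ : ℝ}
    (hε : 0 < ε) (hδ : 0 < δ) (ht : range cantorEmbedding ∩ ball 0 ε ⊆ t) :
    ¬ IsUniformlyDisconnectedWithOn t δ := by
  have h6 : ∀ᶠ n : ℕ in Filter.atTop, 6 / ((n + 2 : ℕ) : ℝ) ≤ δ :=
    ((tendsto_const_div_atTop_nhds_zero_nat 6).comp (Filter.tendsto_add_atTop_nat 2)).eventually
      (ge_mem_nhds hδ)
  have hsmall : ∀ᶠ n : ℕ in Filter.atTop, 2 * (4 : ℝ)⁻¹ ^ n < ε :=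
    ((tendsto_pow_atTop_nhds_zero_of_lt_one (by norm_num) (by norm_num)).const_mul 2).eventually
      (gt_mem_nhds (by simpa using hε))
  obtain ⟨n, hn2, hn6, hnε⟩ := (Filter.eventually_ge_atTop 2 |>.and (h6.and hsmall)).exists
  intro h
  refine not_isUniformlyDisconnectedWithOn_range_levelPoint hn2 (h.mono ?_ (by exact_mod_cast hn6))
  rintro _ ⟨y, rfl⟩
  obtain ⟨h1, h2⟩ := levelPoint_mem_Icc n y
  refine ht ⟨levelPoint_mem_range n y, ?_⟩
  rw [mem_ball, Real.dist_0_eq_abs, abs_of_pos (lt_of_lt_of_le (by positivity) h1)]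
  linarith

theorem isCantorSpace_range_cantorEmbedding : IsCantorSpace (range cantorEmbedding) :=
  ⟨(continuous_cantorEmbedding.isClosedEmbedding cantorEmbedding_injective).toHomeomorph.symm.trans
    cantorSetHomeomorphNatToBool.symm⟩

theorem not_isUniformlyDisconnected_range_cantorEmbedding :
    ¬ IsUniformlyDisconnected (range cantorEmbedding) := by
  rintro ⟨δ, hδ, -, h⟩
  rw [isometry_subtype_coe.isUniformlyDisconnectedWith_iff, Subtype.range_coe] at h
  exact not_isUniformlyDisconnectedWithOn_of_inter_ball_zero_subset one_pos hδ inter_subset_left h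

theorem SUD_range_cantorEmbedding :
    SUD (range cantorEmbedding) = {⟨0, _, cantorEmbedding_const_true⟩} := by
  have hiso : ∀ s : Set (range cantorEmbedding), Isometry (Subtype.val ∘ Subtype.val : s → ℝ) :=
    fun _ => isometry_subtype_coe.comp isometry_subtype_coe
  ext x
  constructor
  · intro hx
    by_contra hx0
    obtain ⟨n, y, hxy⟩ :=
      (mem_range_cantorEmbedding.1 x.2).resolve_left fun h => hx0 (Subtype.ext h)
    refine hx (ball x (4⁻¹ ^ n / 4)) (ball_mem_nhds _ (by positivity))
      ⟨1 / (2 * (n + 2)), by positivity, by rw [div_lt_one (by positivity)]; linarith, ?_⟩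
    rw [(hiso _).isUniformlyDisconnectedWith_iff]
    refine (isUniformlyDisconnectedWithOn_range_levelPoint n).mono ?_ le_rfl
    rintro _ ⟨⟨⟨t, ht⟩, hts⟩, rfl⟩
    rw [mem_ball, Subtype.dist_eq, Real.dist_eq, ← hxy] at hts
    exact exists_levelPoint_eq_of_abs_sub_lt ht hts
  · rintro rfl s hs ⟨δ, hδ, -, h⟩
    obtain ⟨ε, hε, hball⟩ := Metric.mem_nhds_iff.1 hs
    rw [(hiso s).isUniformlyDisconnectedWith_iff] at h
    refine not_isUniformlyDisconnectedWithOn_of_inter_ball_zero_subset hε hδ ?_ h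
    rintro t ⟨ht, htε⟩
    exact ⟨⟨⟨t, ht⟩, hball (by simpa [mem_ball, Subtype.dist_eq] using htε)⟩, rfl⟩

theorem statement_12 :
    ∃ (X : Type) (m : MetricSpace X),
      @IsCantorSpace X (metricTopology m) ∧
      @HasType X m true false true ∧
      ∃ p : X, @SUD X m = {p} := by
  exact ⟨range cantorEmbedding, inferInstance, isCantorSpace_range_cantorEmbedding,
    ⟨iff_of_true (isDoubling_subset_real _) rfl,
      iff_of_false not_isUniformlyDisconnected_range_cantorEmbedding Bool.false_ne_true,
      iff_of_true isUniformlyPerfect_range_cantorEmbedding rfl⟩,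
    _, SUD_range_cantorEmbedding⟩

end
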